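/- With G^⊖ as above (the doubling of G with each vertex connected to the neighbors of its copy), the assortativity coefficient of G^⊖ equals that of G: both the numerator 4m Σ d_u d_v − (Σ(d_u+d_v))² and the denominator 2m Σ(d_u²+d_v²) − (Σ(d_u+d_v))² of G^⊖ equal exactly 64 times the corresponding quantities for G. In particular, if G is neutral then G^⊖ is neutral. -/

import Mathlib

open Finset

attribute [local instance] Classical.propDecidable

namespace Neutral

/-- Number of edges of `G`. -/
noncomputable def m {V : Type*} [Fintype V] (G : SimpleGraph V) : ℕ :=
  G.edgeFinset.card

/-- `∑_{uv ∈ E} d_u · d_v`, each edge counted once. -/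
noncomputable def dd {V : Type*} [Fintype V] (G : SimpleGraph V) : ℕ :=
  ∑ e ∈ G.edgeFinset,
    Sym2.lift ⟨fun u v => G.degree u * G.degree v, fun _ _ => Nat.mul_comm _ _⟩ e

/-- `∑_{uv ∈ E} (d_u + d_v)`, each edge counted once. -/
noncomputable def ds {V : Type*} [Fintype V] (G : SimpleGraph V) : ℕ :=
  ∑ e ∈ G.edgeFinset,
    Sym2.lift ⟨fun u v => G.degree u + G.degree v, fun _ _ => Nat.add_comm _ _⟩ e

/-- `∑_{uv ∈ E} (d_u² + d_v²)`, each edge counted once. -/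
noncomputable def dsq {V : Type*} [Fintype V] (G : SimpleGraph V) : ℕ :=
  ∑ e ∈ G.edgeFinset,
    Sym2.lift ⟨fun u v => G.degree u ^ 2 + G.degree v ^ 2, fun _ _ => Nat.add_comm _ _⟩ e

/-- A graph is irregular if it is not regular of any degree. -/
def Irregular {V : Type*} [Fintype V] (G : SimpleGraph V) : Prop :=
  ¬ ∃ k, G.IsRegularOfDegree k

end Neutral

open Neutral

namespace Neutral

/-- The doubling `G^⊖` of `G`: two copies of `G`, with each vertex additionally joined
to all neighbours of its twin in the other copy.  Equivalently, `x` and `y` are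
adjacent iff their projections to `V` are adjacent in `G`. -/
def Doubling {V : Type*} (G : SimpleGraph V) : SimpleGraph (V ⊕ V) where
  Adj x y := G.Adj (Sum.elim id id x) (Sum.elim id id y)
  symm := ⟨fun _ _ h => G.adj_symm h⟩
  loopless := ⟨fun x h => G.irrefl h⟩

end Neutral

/-!
The doubling is the pullback of `G` along the two-to-one fold `V ⊕ V → V`. Along a map `p`
all of whose fibres have `k` elements, the pullback multiplies every degree by `k` and lifts
each edge of `G` to `k²` edges, so `m`, `∑ d_u d_v`, `∑ (d_u + d_v)` and `∑ (d_u² + d_v²)`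
scale by `k²`, `k⁴`, `k³` and `k⁴`. Hence both the numerator and the denominator of the
assortativity scale by `k⁶`, which is `64` for the doubling.
-/

theorem Fintype.sum_comp_eq_nsmul_sum_of_card_fiber {V W M : Type*} [Fintype V] [Fintype W]
    [AddCommMonoid M] {p : W → V} {k : ℕ} (hp : ∀ v, #{x | p x = v} = k) (g : V → M) :
    ∑ x, g (p x) = k • ∑ v, g v := by
  rw [← Finset.sum_fiberwise' univ p g, Finset.smul_sum]
  exact Finset.sum_congr rfl fun v _ => by rw [Finset.sum_const, hp]

namespace SimpleGraph

variable {V W : Type*} [Fintype V] [Fintype W]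

theorem two_nsmul_sum_edgeFinset_lift {M : Type*} [AddCommMonoid M] (G : SimpleGraph V)
    (f : {f : V → V → M // ∀ a b, f a b = f b a}) :
    2 • ∑ e ∈ G.edgeFinset, Sym2.lift f e = ∑ u, ∑ v, if G.Adj u v then f.1 u v else 0 := by
  have hdarts : ∑ d : G.Dart, Sym2.lift f d.edge = 2 • ∑ e ∈ G.edgeFinset, Sym2.lift f e := by
    rw [← Finset.sum_fiberwise_of_maps_to' (t := G.edgeFinset)
      (fun d _ => G.mem_edgeFinset.2 d.edge_mem), Finset.smul_sum]
    refine Finset.sum_congr rfl fun e he => ?_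
    rw [Finset.sum_const, G.dart_edge_fiber_card e (G.mem_edgeFinset.1 he)]
  rw [← hdarts, ← Fintype.sum_prod_type', ← Finset.sum_filter]
  refine Finset.sum_bij' (fun d _ ↦ (d.fst, d.snd)) (fun xy h ↦ ⟨xy, (mem_filter.1 h).2⟩)
    ?_ ?_ ?_ ?_ ?_ <;> simp [Dart.edge]

theorem degree_eq_sum_ite (G : SimpleGraph V) (u : V) :
    G.degree u = ∑ v, if G.Adj u v then 1 else 0 := by
  rw [← card_neighborFinset_eq_degree, neighborFinset_eq_filter, Finset.card_filter]

variable {G : SimpleGraph V} {H : SimpleGraph W} {p : W → V} {k : ℕ}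
  (hp : ∀ v, #{x | p x = v} = k) (hH : ∀ x y, H.Adj x y ↔ G.Adj (p x) (p y))
include hp hH

theorem degree_eq_mul_degree_of_card_fiber (x : W) : H.degree x = k * G.degree (p x) := by
  simp only [degree_eq_sum_ite, hH]
  exact Fintype.sum_comp_eq_nsmul_sum_of_card_fiber hp fun v => if G.Adj (p x) v then 1 else 0

theorem card_edgeFinset_eq_of_card_fiber : #H.edgeFinset = k ^ 2 * #G.edgeFinset := by
  have h := H.sum_degrees_eq_twice_card_edges
  simp only [degree_eq_mul_degree_of_card_fiber hp hH] at h
  rw [Fintype.sum_comp_eq_nsmul_sum_of_card_fiber hp (fun v => k * G.degree v),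
    ← Finset.mul_sum, sum_degrees_eq_twice_card_edges, smul_eq_mul] at h
  linarith

theorem sum_edgeFinset_lift_eq_of_card_fiber (F : {F : W → W → ℕ // ∀ a b, F a b = F b a})
    (f : {f : V → V → ℕ // ∀ a b, f a b = f b a}) (c : ℕ)
    (hF : ∀ x y, F.1 x y = c * f.1 (p x) (p y)) :
    ∑ e ∈ H.edgeFinset, Sym2.lift F e = k ^ 2 * c * ∑ e ∈ G.edgeFinset, Sym2.lift f e := by
  -- over ordered pairs of vertices, the sum for `H` is a sum over `p × p` of one for `G`
  refine Nat.eq_of_mul_eq_mul_left two_pos ?_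
  rw [mul_left_comm, ← smul_eq_mul 2, ← smul_eq_mul 2, two_nsmul_sum_edgeFinset_lift,
    two_nsmul_sum_edgeFinset_lift, Finset.mul_sum]
  simp only [hH, hF]
  have hsum (g : V → V → ℕ) : ∑ x, ∑ y, g (p x) (p y) = k ^ 2 * ∑ u, ∑ v, g u v := by
    calc ∑ x, ∑ y, g (p x) (p y)
        = k • ∑ x, ∑ v, g (p x) v := by
          rw [Finset.smul_sum]
          exact Finset.sum_congr rfl fun x _ =>
            Fintype.sum_comp_eq_nsmul_sum_of_card_fiber hp (g (p x))
      _ = k ^ 2 * ∑ u, ∑ v, g u v := by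
          rw [Fintype.sum_comp_eq_nsmul_sum_of_card_fiber hp fun u => ∑ v, g u v, smul_smul, sq,
            smul_eq_mul]
  rw [hsum fun u v => if G.Adj u v then c * f.1 u v else 0]
  simp only [Finset.mul_sum, mul_ite, mul_zero, mul_assoc]

end SimpleGraph

theorem card_filter_sumElim_id_eq {V : Type*} [Fintype V] (v : V) :
    #{x : V ⊕ V | Sum.elim id id x = v} = 2 := by
  have hfiber : ({x : V ⊕ V | Sum.elim id id x = v} : Finset _) = {Sum.inl v, Sum.inr v} := by
    ext (x | x) <;> simp [eq_comm]
  rw [hfiber, card_pair Sum.inl_ne_inr]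

namespace Neutral

section

variable {V W : Type*} [Fintype V] [Fintype W] {G : SimpleGraph V} {H : SimpleGraph W}
  {p : W → V} {k : ℕ} (hp : ∀ v, #{x | p x = v} = k) (hH : ∀ x y, H.Adj x y ↔ G.Adj (p x) (p y))
include hp hH

theorem m_eq_of_card_fiber : m H = k ^ 2 * m G :=
  SimpleGraph.card_edgeFinset_eq_of_card_fiber hp hH

theorem dd_eq_of_card_fiber : dd H = k ^ 4 * dd G := by
  rw [dd, dd, SimpleGraph.sum_edgeFinset_lift_eq_of_card_fiber hp hH _ _ (k ^ 2)]
  · ring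
  · intro x y
    simp only [SimpleGraph.degree_eq_mul_degree_of_card_fiber hp hH]
    ring

theorem ds_eq_of_card_fiber : ds H = k ^ 3 * ds G := by
  rw [ds, ds, SimpleGraph.sum_edgeFinset_lift_eq_of_card_fiber hp hH _ _ k]
  · ring
  · intro x y
    simp only [SimpleGraph.degree_eq_mul_degree_of_card_fiber hp hH]
    ring

theorem dsq_eq_of_card_fiber : dsq H = k ^ 4 * dsq G := by
  rw [dsq, dsq, SimpleGraph.sum_edgeFinset_lift_eq_of_card_fiber hp hH _ _ (k ^ 2)]
  · ring
  · intro x y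
    simp only [SimpleGraph.degree_eq_mul_degree_of_card_fiber hp hH]
    ring

theorem assortativity_numerator_eq_of_card_fiber :
    4 * (m H : ℤ) * dd H - (ds H : ℤ) ^ 2 = k ^ 6 * (4 * (m G : ℤ) * dd G - (ds G : ℤ) ^ 2) := by
  rw [m_eq_of_card_fiber hp hH, dd_eq_of_card_fiber hp hH, ds_eq_of_card_fiber hp hH]
  push_cast
  ring

theorem assortativity_denominator_eq_of_card_fiber :
    2 * (m H : ℤ) * dsq H - (ds H : ℤ) ^ 2 = k ^ 6 * (2 * (m G : ℤ) * dsq G - (ds G : ℤ) ^ 2) := by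
  rw [m_eq_of_card_fiber hp hH, dsq_eq_of_card_fiber hp hH, ds_eq_of_card_fiber hp hH]
  push_cast
  ring

theorem four_mul_m_mul_dd_eq_sq_of_card_fiber (hG : 4 * m G * dd G = ds G ^ 2) :
    4 * m H * dd H = ds H ^ 2 := by
  rw [m_eq_of_card_fiber hp hH, dd_eq_of_card_fiber hp hH, ds_eq_of_card_fiber hp hH]
  calc 4 * (k ^ 2 * m G) * (k ^ 4 * dd G) = k ^ 6 * (4 * m G * dd G) := by ring
    _ = (k ^ 3 * ds G) ^ 2 := by rw [hG]; ring

end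

end Neutral

theorem stmt_13 {V : Type*} [Fintype V] (G : SimpleGraph V) :
    4 * (m (Doubling G) : ℤ) * (dd (Doubling G) : ℤ) - (ds (Doubling G) : ℤ) ^ 2 =
        64 * (4 * (m G : ℤ) * (dd G : ℤ) - (ds G : ℤ) ^ 2) ∧
      2 * (m (Doubling G) : ℤ) * (dsq (Doubling G) : ℤ) - (ds (Doubling G) : ℤ) ^ 2 =
        64 * (2 * (m G : ℤ) * (dsq G : ℤ) - (ds G : ℤ) ^ 2) ∧
      (4 * m G * dd G = (ds G) ^ 2 →
        4 * m (Doubling G) * dd (Doubling G) = (ds (Doubling G)) ^ 2) := by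
  have hp : ∀ v : V, #{x : V ⊕ V | Sum.elim id id x = v} = 2 := card_filter_sumElim_id_eq
  have hH : ∀ x y, (Doubling G).Adj x y ↔ G.Adj (Sum.elim id id x) (Sum.elim id id y) :=
    fun _ _ => Iff.rfl
  refine ⟨?_, ?_, four_mul_m_mul_dd_eq_sq_of_card_fiber hp hH⟩
  · rw [assortativity_numerator_eq_of_card_fiber hp hH]
    norm_num
  · rw [assortativity_denominator_eq_of_card_fiber hp hH]
    norm_num
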